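/- arXiv:1012.1946 — 3 statements merged into one kernel-verified Lean document; each statement's English description precedes it below -/
import Mathlib

section
/- There exists no tight Euclidean 6-design in ℝ² supported by two concentric spheres whose weight function is constant on all of X. -/
/-!
Identify `ℝ²` with `ℂ`. For `k ≥ 1` the rotation by `π / k` negates `z ↦ ‖z‖ ^ (2j) z ^ k`, so
these polynomials have zero spherical averages, and for `2j + k ≤ 6` the design identity with
constant weights gives `∑_{z ∈ X} ‖z‖ ^ (2j) z ^ k = 0`.

If the origin lies in `X`, then `(‖x‖² - ρ²) x₀` is a nonzero cubic vanishing on `S`, so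
`dim Pol₃(S) < 10 = |X|`. Otherwise the cases `j = 0, 1` separate the two circles: on each one
the power sums `p₁, …, p₄` vanish, so by Newton's identities it carries at least five points,
hence exactly five, and then `‖p₅‖ = 5 r⁵`. Since the case `j = 0, k = 5` makes the two `p₅`
cancel, the radii coincide.
-/

open MeasureTheory Metric Finset
open scoped Classical RealInnerProductSpace

noncomputable section

/-- Euclidean `n`-space `ℝⁿ`. -/
abbrev Euc (n : ℕ) := EuclideanSpace ℝ (Fin n)

/-- Evaluation of a multivariate polynomial at a point of `ℝⁿ`. -/
def evalPt {n : ℕ} (x : Euc n) (p : MvPolynomial (Fin n) ℝ) : ℝ :=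
  MvPolynomial.eval (fun i => x i) p

/-- The normalized average (with respect to the `O(n)`-invariant surface measure,
i.e. the `(n-1)`-dimensional Hausdorff measure) of `f` over the sphere of radius `r`
centered at the origin; for `r = 0` it is `f 0`. -/
def sphAvg (n : ℕ) (r : ℝ) (f : Euc n → ℝ) : ℝ :=
  if r = 0 then f 0
  else ⨍ y in Metric.sphere (0 : Euc n) r, f y ∂(μH[(n : ℝ) - 1])

/-- `(X, w)` is a Euclidean `t`-design in `ℝⁿ`:
`∑ᵢ (w(Xᵢ)/|Sᵢ|) ∫_{Sᵢ} f dσᵢ = ∑_{x ∈ X} w(x) f(x)` for all polynomials `f` of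
degree at most `t`, where the `Sᵢ` are the concentric spheres supporting `X`. -/
def IsEuclideanDesign (n t : ℕ) (X : Finset (Euc n)) (w : Euc n → ℝ) : Prop :=
  ∀ p : MvPolynomial (Fin n) ℝ, p.totalDegree ≤ t →
    ∑ r ∈ X.image (fun x => ‖x‖),
        (∑ x ∈ X.filter (fun x => ‖x‖ = r), w x) * sphAvg n r (fun y => evalPt y p)
      = ∑ x ∈ X, w x * evalPt x p

/-- Restriction of polynomials to a subset `S ⊆ ℝⁿ`, as a linear map. -/
def polyRestrict (n : ℕ) (S : Set (Euc n)) :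
    MvPolynomial (Fin n) ℝ →ₗ[ℝ] (S → ℝ) where
  toFun p := fun x => evalPt (x : Euc n) p
  map_add' p q := by funext x; simp [evalPt]
  map_smul' c p := by funext x; simp [evalPt, MvPolynomial.smul_eval]

/-- `Pol_e(S)`: the space of restrictions to `S` of polynomials of total degree at most `e`. -/
def PolOn (n e : ℕ) (S : Set (Euc n)) : Submodule ℝ (S → ℝ) :=
  (MvPolynomial.restrictTotalDegree (Fin n) ℝ e).map (polyRestrict n S)

/-- `dim Pol_e(S)`. -/
def dimPolOn (n e : ℕ) (S : Set (Euc n)) : ℕ := Module.finrank ℝ (PolOn n e S)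

/-- The union of the concentric spheres (centered at the origin) supporting `X`. -/
def suppSpheres (n : ℕ) (X : Finset (Euc n)) : Set (Euc n) :=
  ⋃ r ∈ X.image (fun x => ‖x‖), Metric.sphere (0 : Euc n) r

/-- `(X, w)` is a tight Euclidean `2e`-design on `S` (the union of the concentric
spheres supporting `X`): it is a Euclidean `2e`-design with `|X| = dim Pol_e(S)`. -/
def IsTightOnS (n e : ℕ) (X : Finset (Euc n)) (w : Euc n → ℝ) : Prop :=
  IsEuclideanDesign n (2 * e) X w ∧ X.card = dimPolOn n e (suppSpheres n X)

/-- `(X, w)` is a tight Euclidean `2e`-design: tight on `S` and moreover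
`dim Pol_e(S) = dim Pol_e(ℝⁿ) = C(n+e, e)`. -/
def IsTightDesign (n e : ℕ) (X : Finset (Euc n)) (w : Euc n → ℝ) : Prop :=
  IsTightOnS n e X w ∧ dimPolOn n e (suppSpheres n X) = (n + e).choose e

theorem Fintype.sum_pow_card_eq_of_sum_pow_eq_zero {σ R : Type*} [Fintype σ] [CommRing R]
    (g : σ → R) (h : ∀ i, 0 < i → i < Fintype.card σ → ∑ s, g s ^ i = 0) :
    ∑ s, g s ^ Fintype.card σ = (-1) ^ (Fintype.card σ + 1) * Fintype.card σ * ∏ s, g s := by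
  rcases (Fintype.card σ).eq_zero_or_pos with h0 | hpos
  · simp [Fintype.card_eq_zero_iff.mp h0]
  have newton := congrArg (MvPolynomial.aeval g) (MvPolynomial.psum_eq_mul_esymm_sub_sum σ R _ hpos)
  rw [map_sub, map_sum, Finset.sum_eq_zero, sub_zero] at newton
  · simpa [MvPolynomial.psum, MvPolynomial.esymm, ← card_univ] using newton
  intro a ha
  simp only [mem_filter, HasAntidiagonal.mem_antidiagonal, Set.mem_Ioo] at ha
  simp [MvPolynomial.psum, h a.2 (by omega) (by omega)]

theorem Finset.sum_pow_card_eq_of_sum_pow_eq_zero {R : Type*} [CommRing R] (s : Finset R)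
    (h : ∀ i, 0 < i → i < #s → ∑ z ∈ s, z ^ i = 0) :
    ∑ z ∈ s, z ^ #s = (-1) ^ (#s + 1) * #s * ∏ z ∈ s, z := by
  simp only [← sum_coe_sort s, ← prod_coe_sort s, ← Fintype.card_coe s] at h ⊢
  exact Fintype.sum_pow_card_eq_of_sum_pow_eq_zero _ h

theorem Finset.lt_card_of_sum_pow_eq_zero {K : Type*} [Field K] [CharZero K] {s : Finset K}
    (hs : s.Nonempty) (h0 : 0 ∉ s) {m : ℕ} (h : ∀ k, 0 < k → k ≤ m → ∑ z ∈ s, z ^ k = 0) :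
    m < #s := by
  by_contra! hle
  have hnewton := s.sum_pow_card_eq_of_sum_pow_eq_zero fun i hi his => h i hi (by omega)
  rw [h _ hs.card_pos hle] at hnewton
  obtain ⟨z, hz, rfl⟩ : ∃ z ∈ s, z = 0 := by
    simpa [eq_comm (a := (0 : K)), hs.card_pos.ne', prod_eq_zero_iff] using hnewton
  exact h0 hz

theorem Finset.norm_sum_pow_card_eq_of_sum_pow_eq_zero {s : Finset ℂ} {r : ℝ}
    (hr : ∀ z ∈ s, ‖z‖ = r) (h : ∀ i, 0 < i → i < #s → ∑ z ∈ s, z ^ i = 0) :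
    ‖∑ z ∈ s, z ^ #s‖ = #s * r ^ #s := by
  rw [s.sum_pow_card_eq_of_sum_pow_eq_zero h, norm_mul, norm_mul, norm_prod,
    prod_congr rfl hr, prod_const]
  simp

theorem Finset.sum_filter_eq_zero_of_sum_smul_eq_zero {ι K M : Type*} [Field K] [AddCommGroup M]
    [Module K M] {s : Finset ι} {g : ι → K} {f : ι → M} {a b : K} (hab : a ≠ b)
    (hg : ∀ i ∈ s, g i = a ∨ g i = b) (h0 : ∑ i ∈ s, f i = 0) (h1 : ∑ i ∈ s, g i • f i = 0) :
    ∑ i ∈ s with g i = a, f i = 0 := by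
  have hA : ∑ i ∈ s with g i = a, g i • f i = a • ∑ i ∈ s with g i = a, f i := by
    rw [smul_sum]
    exact sum_congr rfl fun i hi => by rw [(mem_filter.mp hi).2]
  have hB : ∑ i ∈ s with ¬g i = a, g i • f i = b • ∑ i ∈ s with ¬g i = a, f i := by
    rw [smul_sum]
    refine sum_congr rfl fun i hi => ?_
    rw [(hg i (mem_filter.mp hi).1).resolve_left (mem_filter.mp hi).2]
  rw [← sum_filter_add_sum_filter_not s (g · = a)] at h0 h1
  rw [hA, hB, eq_neg_of_add_eq_zero_right h0, smul_neg, ← sub_eq_add_neg, ← sub_smul] at h1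
  exact (smul_eq_zero.mp h1).resolve_left (sub_ne_zero.mpr hab)

theorem sum_pow_filter_norm_eq_eq_zero {Z : Finset ℂ} {r r' : ℝ} (hr : 0 ≤ r) (hr' : 0 ≤ r')
    (hne : r ≠ r') (hZ : ∀ z ∈ Z, ‖z‖ = r ∨ ‖z‖ = r')
    (hmom : ∀ j k, 0 < k → 2 * j + k ≤ 6 → ∑ z ∈ Z, ‖z‖ ^ (2 * j) • z ^ k = 0)
    {k : ℕ} (hk : 0 < k) (hk4 : k ≤ 4) : ∑ z ∈ Z with ‖z‖ = r, z ^ k = 0 := by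
  have hsq : ∀ z : ℂ, ‖z‖ ^ 2 = r ^ 2 ↔ ‖z‖ = r := fun z =>
    pow_left_inj₀ (norm_nonneg z) hr two_ne_zero
  rw [← filter_congr fun z _ => hsq z]
  refine sum_filter_eq_zero_of_sum_smul_eq_zero (g := fun z : ℂ => ‖z‖ ^ 2)
    (mt (pow_left_inj₀ hr hr' two_ne_zero).mp hne) (fun z hz => ?_) ?_ ?_
  · exact (hZ z hz).imp (congrArg (· ^ 2)) (congrArg (· ^ 2))
  · simpa using hmom 0 k hk (by omega)
  · simpa using hmom 1 k hk (by omega)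

theorem card_ne_ten_of_sum_norm_pow_smul_pow_eq_zero {Z : Finset ℂ}
    (hradii : (Z.image (‖·‖)).card = 2) (h0 : 0 ∉ Z)
    (hmom : ∀ j k, 0 < k → 2 * j + k ≤ 6 → ∑ z ∈ Z, ‖z‖ ^ (2 * j) • z ^ k = 0) :
    #Z ≠ 10 := by
  obtain ⟨r₁, r₂, hne, himage⟩ := card_eq_two.mp hradii
  have hmem : ∀ {r}, r ∈ Z.image (‖·‖) ↔ r = r₁ ∨ r = r₂ := by simp [himage]
  have hZ : ∀ z ∈ Z, ‖z‖ = r₁ ∨ ‖z‖ = r₂ := fun z hz => hmem.mp (mem_image_of_mem _ hz)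
  obtain ⟨z₁, hz₁, hz₁r⟩ := mem_image.mp (hmem.mpr (Or.inl rfl))
  obtain ⟨z₂, hz₂, hz₂r⟩ := mem_image.mp (hmem.mpr (Or.inr rfl))
  have hr₁ : 0 ≤ r₁ := hz₁r ▸ norm_nonneg z₁
  have hr₂ : 0 ≤ r₂ := hz₂r ▸ norm_nonneg z₂
  have hsplit : Z.filter (¬‖·‖ = r₁) = Z.filter (‖·‖ = r₂) :=
    filter_congr fun z hz => ⟨(hZ z hz).resolve_left, fun h h' => hne (h'.symm.trans h)⟩
  set Z₁ := Z.filter (‖·‖ = r₁)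
  set Z₂ := Z.filter (‖·‖ = r₂)
  have hp₁ : ∀ k, 0 < k → k ≤ 4 → ∑ z ∈ Z₁, z ^ k = 0 := fun k hk hk4 =>
    sum_pow_filter_norm_eq_eq_zero hr₁ hr₂ hne hZ hmom hk hk4
  have hp₂ : ∀ k, 0 < k → k ≤ 4 → ∑ z ∈ Z₂, z ^ k = 0 := fun k hk hk4 =>
    sum_pow_filter_norm_eq_eq_zero hr₂ hr₁ hne.symm (fun z hz => (hZ z hz).symm) hmom hk hk4
  have hcard₁ : 4 < #Z₁ := lt_card_of_sum_pow_eq_zero ⟨z₁, mem_filter.mpr ⟨hz₁, hz₁r⟩⟩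
    (fun h => h0 (mem_filter.mp h).1) hp₁
  have hcard₂ : 4 < #Z₂ := lt_card_of_sum_pow_eq_zero ⟨z₂, mem_filter.mpr ⟨hz₂, hz₂r⟩⟩
    (fun h => h0 (mem_filter.mp h).1) hp₂
  intro hZ10
  have hcard : #Z₁ + #Z₂ = 10 := by rw [← hsplit, card_filter_add_card_filter_not, hZ10]
  have hfive₁ : #Z₁ = 5 := by omega
  have hfive₂ : #Z₂ = 5 := by omega
  have hnorm₁ := norm_sum_pow_card_eq_of_sum_pow_eq_zero (s := Z₁)
    (fun z hz => (mem_filter.mp hz).2) fun i hi hi5 => hp₁ i hi (by omega)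
  have hnorm₂ := norm_sum_pow_card_eq_of_sum_pow_eq_zero (s := Z₂)
    (fun z hz => (mem_filter.mp hz).2) fun i hi hi5 => hp₂ i hi (by omega)
  have hsum : ∑ z ∈ Z₁, z ^ 5 = -∑ z ∈ Z₂, z ^ 5 := by
    refine eq_neg_of_add_eq_zero_left ?_
    rw [← hsplit, sum_filter_add_sum_filter_not]
    simpa using hmom 0 5 (by norm_num) (by norm_num)
  rw [hfive₁, hsum, norm_neg] at hnorm₁
  rw [hfive₂, hnorm₁] at hnorm₂
  exact hne ((pow_left_inj₀ hr₁ hr₂ (by norm_num)).mp (mul_left_cancel₀ (by norm_num) hnorm₂))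

def IsPolynomialFun {n : ℕ} (d : ℕ) (f : Euc n → ℝ) : Prop :=
  ∃ p : MvPolynomial (Fin n) ℝ, p.totalDegree ≤ d ∧ ∀ x, evalPt x p = f x

namespace IsPolynomialFun

variable {n d e : ℕ} {f g : Euc n → ℝ}

theorem const (c : ℝ) : IsPolynomialFun (n := n) 0 fun _ => c :=
  ⟨MvPolynomial.C c, (MvPolynomial.totalDegree_C c).le, fun _ => MvPolynomial.eval_C c⟩

theorem coord (i : Fin n) : IsPolynomialFun 1 fun x : Euc n => x i :=
  ⟨MvPolynomial.X i, (MvPolynomial.totalDegree_X i).le, fun _ => MvPolynomial.eval_X i⟩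

theorem mono (hf : IsPolynomialFun d f) (hde : d ≤ e) : IsPolynomialFun e f :=
  let ⟨p, hp, hpf⟩ := hf
  ⟨p, hp.trans hde, hpf⟩

theorem add (hf : IsPolynomialFun d f) (hg : IsPolynomialFun d g) :
    IsPolynomialFun d fun x => f x + g x :=
  let ⟨p, hp, hpf⟩ := hf
  let ⟨q, hq, hqg⟩ := hg
  ⟨p + q, (MvPolynomial.totalDegree_add p q).trans (max_le hp hq),
    fun x => by simp [evalPt, ← hpf x, ← hqg x]⟩

theorem sub (hf : IsPolynomialFun d f) (hg : IsPolynomialFun d g) :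
    IsPolynomialFun d fun x => f x - g x :=
  let ⟨p, hp, hpf⟩ := hf
  let ⟨q, hq, hqg⟩ := hg
  ⟨p - q, (MvPolynomial.totalDegree_sub p q).trans (max_le hp hq),
    fun x => by simp [evalPt, ← hpf x, ← hqg x]⟩

theorem mul (hf : IsPolynomialFun d f) (hg : IsPolynomialFun e g) :
    IsPolynomialFun (d + e) fun x => f x * g x :=
  let ⟨p, hp, hpf⟩ := hf
  let ⟨q, hq, hqg⟩ := hg
  ⟨p * q, (MvPolynomial.totalDegree_mul p q).trans (add_le_add hp hq),
    fun x => by simp [evalPt, ← hpf x, ← hqg x]⟩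

theorem pow (hf : IsPolynomialFun d f) (m : ℕ) : IsPolynomialFun (m * d) fun x => f x ^ m :=
  let ⟨p, hp, hpf⟩ := hf
  ⟨p ^ m, (MvPolynomial.totalDegree_pow p m).trans (Nat.mul_le_mul_left m hp),
    fun x => by simp [evalPt, ← hpf x]⟩

theorem sum {ι : Type*} (s : Finset ι) {f : ι → Euc n → ℝ} (hf : ∀ i ∈ s, IsPolynomialFun d (f i)) :
    IsPolynomialFun d fun x => ∑ i ∈ s, f i x := by
  induction s using Finset.cons_induction with
  | empty => simpa using (const (n := n) 0).mono (Nat.zero_le d)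
  | cons i s hi ih =>
    simp only [sum_cons]
    exact (hf i (mem_cons_self i s)).add (ih fun j hj => hf j (mem_cons_of_mem hj))

end IsPolynomialFun

theorem isPolynomialFun_norm_sq (n : ℕ) : IsPolynomialFun 2 fun x : Euc n => ‖x‖ ^ 2 := by
  simp_rw [EuclideanSpace.norm_sq_eq, Real.norm_eq_abs, sq_abs]
  exact IsPolynomialFun.sum _ fun i _ => (IsPolynomialFun.coord i).pow 2

def toComplex : Euc 2 ≃ₗᵢ[ℝ] ℂ := Complex.orthonormalBasisOneI.repr.symm

theorem toComplex_apply (x : Euc 2) : toComplex x = x 0 + x 1 * Complex.I :=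
  Complex.orthonormalBasisOneI_repr_symm_apply x

theorem isPolynomialFun_toComplex_pow (k : ℕ) (L : ℂ →ₗ[ℝ] ℝ) :
    IsPolynomialFun k fun x => L (toComplex x ^ k) := by
  induction k generalizing L with
  | zero => simpa using IsPolynomialFun.const (L 1)
  | succ k ih =>
    have hstep (x : Euc 2) : toComplex x ^ (k + 1) =
        x 0 • toComplex x ^ k + x 1 • (Complex.I * toComplex x ^ k) := by
      rw [pow_succ, toComplex_apply, Complex.real_smul, Complex.real_smul]
      ring
    simp only [hstep, map_add, map_smul, smul_eq_mul]
    rw [add_comm k 1]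
    exact ((IsPolynomialFun.coord 0).mul (ih L)).add
      ((IsPolynomialFun.coord 1).mul (ih (L ∘ₗ LinearMap.mulLeft ℝ Complex.I)))

theorem sphAvg_eq_zero_of_comp_eq_neg {n : ℕ} (e : Euc n ≃ₗᵢ[ℝ] Euc n) {f : Euc n → ℝ}
    (hf : ∀ x, f (e x) = -f x) (r : ℝ) : sphAvg n r f = 0 := by
  unfold sphAvg
  split_ifs
  · linarith [map_zero e ▸ hf 0]
  · have hinv := (e.toIsometryEquiv.measurePreserving_hausdorffMeasure ((n : ℝ) - 1))
      |>.setIntegral_preimage_emb e.toHomeomorph.measurableEmbedding f (sphere 0 r)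
    simp only [LinearIsometryEquiv.coe_toIsometryEquiv, LinearIsometryEquiv.preimage_sphere,
      map_zero, hf, integral_neg] at hinv
    rw [setAverage_eq, show ∫ y in sphere 0 r, f y ∂μH[(n : ℝ) - 1] = 0 by linarith, smul_zero]

def rotationEuc (a : Circle) : Euc 2 ≃ₗᵢ[ℝ] Euc 2 :=
  toComplex.trans ((rotation a).trans toComplex.symm)

theorem toComplex_rotationEuc (a : Circle) (x : Euc 2) :
    toComplex (rotationEuc a x) = a * toComplex x := by
  simp [rotationEuc]

theorem sphAvg_norm_pow_mul_toComplex_pow_eq_zero (j : ℕ) {k : ℕ} (hk : 0 < k) (L : ℂ →ₗ[ℝ] ℝ)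
    (r : ℝ) : sphAvg 2 r (fun x => ‖x‖ ^ (2 * j) * L (toComplex x ^ k)) = 0 := by
  set a := Circle.exp (Real.pi / k)
  have ha : (a : ℂ) ^ k = -1 := by
    rw [Circle.coe_exp, ← Complex.exp_nat_mul, ← Complex.exp_pi_mul_I]
    have hk' : (k : ℂ) ≠ 0 := by exact_mod_cast hk.ne'
    congr 1
    push_cast
    field_simp
  refine sphAvg_eq_zero_of_comp_eq_neg (rotationEuc a) (fun x => ?_) r
  rw [LinearIsometryEquiv.norm_map, toComplex_rotationEuc, mul_pow, ha, neg_one_mul, map_neg,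
    mul_neg]

theorem IsEuclideanDesign.sum_eq_zero {n t : ℕ} {X : Finset (Euc n)} {w : Euc n → ℝ}
    (hX : IsEuclideanDesign n t X w) (hw : ∀ x ∈ X, 0 < w x)
    (hconst : ∀ x ∈ X, ∀ y ∈ X, w x = w y) {f : Euc n → ℝ} (hf : IsPolynomialFun t f)
    (havg : ∀ r, sphAvg n r f = 0) : ∑ x ∈ X, f x = 0 := by
  rcases X.eq_empty_or_nonempty with rfl | ⟨x₀, hx₀⟩
  · exact sum_empty
  obtain ⟨p, hp, hpf⟩ := hf
  have hdesign := hX p hp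
  simp only [hpf, havg, mul_zero, sum_const_zero] at hdesign
  rw [sum_congr rfl fun x hx => by rw [hconst x hx x₀ hx₀], ← mul_sum] at hdesign
  exact (mul_eq_zero.mp hdesign.symm).resolve_left (hw x₀ hx₀).ne'

theorem IsEuclideanDesign.sum_norm_pow_smul_toComplex_pow_eq_zero {t : ℕ} {X : Finset (Euc 2)}
    {w : Euc 2 → ℝ} (hX : IsEuclideanDesign 2 t X w) (hw : ∀ x ∈ X, 0 < w x)
    (hconst : ∀ x ∈ X, ∀ y ∈ X, w x = w y) {j k : ℕ} (hk : 0 < k) (hjk : 2 * j + k ≤ t) :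
    ∑ x ∈ X, ‖x‖ ^ (2 * j) • toComplex x ^ k = 0 := by
  have hL : ∀ L : ℂ →ₗ[ℝ] ℝ, L (∑ x ∈ X, ‖x‖ ^ (2 * j) • toComplex x ^ k) = 0 := by
    intro L
    simp only [map_sum, map_smul, smul_eq_mul]
    refine hX.sum_eq_zero hw hconst ?_ (sphAvg_norm_pow_mul_toComplex_pow_eq_zero j hk L)
    simp only [pow_mul]
    exact (((isPolynomialFun_norm_sq 2).pow j).mul (isPolynomialFun_toComplex_pow k L)).mono
      (by omega)
  exact Complex.ext (hL Complex.reLm) (hL Complex.imLm)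

theorem Submodule.finrank_map_lt_of_mem_ker {K V W : Type*} [Field K] [AddCommGroup V] [Module K V]
    [AddCommGroup W] [Module K W] {U : Submodule K V} [FiniteDimensional K U] (f : V →ₗ[K] W)
    {q : V} (hqU : q ∈ U) (hq : q ≠ 0) (hfq : f q = 0) :
    Module.finrank K (U.map f) < Module.finrank K U := by
  have hker : LinearMap.ker (f ∘ₗ U.subtype) ≠ ⊥ :=
    (Submodule.ne_bot_iff _).mpr ⟨⟨q, hqU⟩, hfq, fun h => hq (congrArg Subtype.val h)⟩
  rw [show U.map f = LinearMap.range (f ∘ₗ U.subtype) by rw [LinearMap.range_comp, U.range_subtype],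
    ← (f ∘ₗ U.subtype).finrank_range_add_finrank_ker]
  exact Nat.lt_add_of_pos_right (Nat.pos_of_ne_zero (mt Submodule.finrank_eq_zero.mp hker))

theorem dimPolOn_lt_finrank_of_isPolynomialFun {n e : ℕ} {S : Set (Euc n)} {f : Euc n → ℝ}
    (hf : IsPolynomialFun e f) (hfS : ∀ x ∈ S, f x = 0) (hf0 : f ≠ 0) :
    dimPolOn n e S < Module.finrank ℝ (MvPolynomial.restrictTotalDegree (Fin n) ℝ e) := by
  obtain ⟨p, hp, hpf⟩ := hf
  refine Submodule.finrank_map_lt_of_mem_ker (polyRestrict n S)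
    ((MvPolynomial.mem_restrictTotalDegree _ _ _).mpr hp) ?_ ?_
  · rintro rfl
    exact hf0 (funext fun x => by simp [← hpf x, evalPt])
  · funext x
    exact (hpf x).trans (hfS x x.2)

theorem finrank_restrictTotalDegree_fin_two_three :
    Module.finrank ℝ (MvPolynomial.restrictTotalDegree (Fin 2) ℝ 3) = 10 := by
  rw [MvPolynomial.restrictTotalDegree,
    Module.finrank_eq_nat_card_basis (MvPolynomial.basisRestrictSupport ℝ _)]
  let exps : Finset (ℕ × ℕ) := (range 4 ×ˢ range 4).filter fun d => d.1 + d.2 ≤ 3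
  have hequiv : {s : Fin 2 →₀ ℕ | (s.sum fun _ e => e) ≤ 3} ≃ exps :=
    ((Finsupp.equivFunOnFinite.trans (piFinTwoEquiv fun _ => ℕ)).subtypeEquiv fun s => by
      simp only [exps, Set.mem_ofPred_eq, Equiv.trans_apply, piFinTwoEquiv_apply,
        Finsupp.equivFunOnFinite_apply, mem_filter, mem_product, mem_range,
        Finsupp.sum_fintype, Fin.sum_univ_two, implies_true]
      omega)
  rw [Nat.card_congr hequiv, Nat.card_eq_fintype_card, Fintype.card_coe]
  rfl

theorem dimPolOn_two_three_lt_ten {S : Set (Euc 2)} {ρ : ℝ} (hS : ∀ x ∈ S, x = 0 ∨ ‖x‖ = ρ) :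
    dimPolOn 2 3 S < 10 := by
  have hf : IsPolynomialFun 3 fun x : Euc 2 => (‖x‖ ^ 2 - ρ ^ 2) * x 0 :=
    ((isPolynomialFun_norm_sq 2).sub ((IsPolynomialFun.const _).mono (Nat.zero_le 2))).mul
      (IsPolynomialFun.coord 0)
  rw [← finrank_restrictTotalDegree_fin_two_three]
  refine dimPolOn_lt_finrank_of_isPolynomialFun hf (fun x hx => ?_) fun h => ?_
  · rcases hS x hx with rfl | hx
    · simp
    · simp [hx]
  · have hval := congrFun h (EuclideanSpace.single 0 (|ρ| + 1))
    simp only [PiLp.norm_single, PiLp.single_apply, if_pos, Real.norm_eq_abs,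
      Pi.zero_apply] at hval
    rw [abs_of_pos (by positivity)] at hval
    nlinarith [abs_nonneg ρ, sq_abs ρ]

theorem mem_suppSpheres {n : ℕ} {X : Finset (Euc n)} {x : Euc n} :
    x ∈ suppSpheres n X ↔ ‖x‖ ∈ X.image (‖·‖) := by
  simp [suppSpheres, eq_comm]

theorem exists_forall_mem_suppSpheres_eq_zero_or_norm_eq {n : ℕ} {X : Finset (Euc n)}
    (hX : (X.image (‖·‖)).card = 2) (h0 : 0 ∈ X) :
    ∃ ρ, ∀ x ∈ suppSpheres n X, x = 0 ∨ ‖x‖ = ρ := by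
  have hmem : (0 : ℝ) ∈ X.image (‖·‖) := by simpa using mem_image_of_mem (‖·‖) h0
  obtain ⟨ρ, hρ⟩ := card_eq_one.mp (by rw [card_erase_of_mem hmem, hX] :
    ((X.image (‖·‖)).erase 0).card = 1)
  refine ⟨ρ, fun x hx => ?_⟩
  by_cases hx0 : ‖x‖ = 0
  · exact .inl (norm_eq_zero.mp hx0)
  · exact .inr (mem_singleton.mp (hρ ▸ mem_erase.mpr ⟨hx0, mem_suppSpheres.mp hx⟩))

/-- There is no tight Euclidean 6-design in `ℝ²` supported by two
concentric spheres whose weight function is constant on all of `X`. -/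
theorem no_tight_euclidean_six_design_constant_weight_dim_two :
    ¬ ∃ (X : Finset (Euc 2)) (w : Euc 2 → ℝ),
        X.Nonempty ∧ (∀ x ∈ X, 0 < w x) ∧
        (X.image (fun x => ‖x‖)).card = 2 ∧
        (∀ x ∈ X, ∀ y ∈ X, w x = w y) ∧
        IsTightDesign 2 3 X w := by
  rintro ⟨X, w, -, hw, hradii, hconst, ⟨hdesign, hcard⟩, hdim⟩
  have hX : #X = 10 := hcard.trans hdim
  by_cases h0 : (0 : Euc 2) ∈ X
  · obtain ⟨ρ, hρ⟩ := exists_forall_mem_suppSpheres_eq_zero_or_norm_eq hradii h0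
    have := dimPolOn_two_three_lt_ten hρ
    omega
  · let Z := X.map toComplex.toEquiv.toEmbedding
    have hnorm : ∀ x, ‖toComplex x‖ = ‖x‖ := toComplex.norm_map
    refine card_ne_ten_of_sum_norm_pow_smul_pow_eq_zero (Z := Z) ?_ ?_ (fun j k hk hjk => ?_) ?_
    · simpa [Z, map_eq_image, image_image, Function.comp_def, hnorm] using hradii
    · simpa [Z, mem_map_equiv] using h0
    · simpa [Z, hnorm] using hdesign.sum_norm_pow_smul_toComplex_pow_eq_zero hw hconst hk hjk
    · simpa [Z] using hX

end
end

section
/- Let (X, w) be a tight Euclidean 2e-design on p concentric spheres in ℝⁿ. Then the weight function w is constant on each layer X_i, for 1 ≤ i ≤ p. -/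
/-
Tightness makes restriction `Pol_e(S) → ℝ^X` bijective. Indeed, if `deg p ≤ e` and `p` vanishes
on `X`, the design identity for `p²` (with positive weights) makes every sphere average of `p²`
vanish; since `μH[n-1]` is finite on a sphere and charges each of its nonempty relatively open
subsets, `p` vanishes on `S`. Both spaces have dimension `|X|`, so every `y ∈ X` has a Lagrange
polynomial `p` of degree `≤ e`. If `‖x‖ = ‖y‖`, the reflection `T` exchanging `x` and `y` preserves
all sphere averages, and testing the design identity with `p²` and `(p ∘ T)²` gives
`w x ≤ ∑ w (p ∘ T)² = ∑ w p² = w y`.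
-/

open MeasureTheory Metric Finset
open scoped Classical RealInnerProductSpace

noncomputable section

open Module

section SphereMeasure

variable {E : Type*} [NormedAddCommGroup E] [InnerProductSpace ℝ E]
  [MeasurableSpace E] [BorelSpace E]

theorem setAverage_sphere_comp_linearIsometryEquiv (d r : ℝ) (T : E ≃ₗᵢ[ℝ] E) (f : E → ℝ) :
    ⨍ x in sphere (0 : E) r, f (T x) ∂μH[d] = ⨍ x in sphere (0 : E) r, f x ∂μH[d] := by
  have hST : T ⁻¹' sphere (0 : E) r = sphere 0 r := by
    rw [LinearIsometryEquiv.preimage_sphere, map_zero]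
  have hT : MeasurePreserving T μH[d] μH[d] :=
    T.toIsometryEquiv.measurePreserving_hausdorffMeasure d
  rw [setAverage_eq, setAverage_eq,
    ← hT.setIntegral_preimage_emb T.toHomeomorph.measurableEmbedding f (sphere 0 r),
    hST]

variable [FiniteDimensional ℝ E]

theorem isAddHaarMeasure_hausdorffMeasure_orthogonal_span_singleton {m : ℕ}
    (hm : finrank ℝ E = m + 1) {v : E} (hv : v ≠ 0) :
    (μH[(m : ℝ)] : Measure (ℝ ∙ v)ᗮ).IsAddHaarMeasure := by
  have : Fact (finrank ℝ E = m + 1) := ⟨hm⟩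
  rw [← Submodule.finrank_orthogonal_span_singleton (𝕜 := ℝ) (n := m) hv]
  infer_instance

theorem hausdorffMeasure_sphere_pos {m : ℕ} (hm : finrank ℝ E = m + 1) {r : ℝ} (hr : 0 < r) :
    0 < μH[(m : ℝ)] (sphere (0 : E) r) := by
  have := nontrivial_of_finrank_eq_succ hm
  obtain ⟨v, hv⟩ := exists_norm_eq E zero_le_one
  have hv0 : v ≠ 0 := norm_ne_zero_iff.mp (by rw [hv]; exact one_ne_zero)
  have := isAddHaarMeasure_hausdorffMeasure_orthogonal_span_singleton hm hv0
  set K := (ℝ ∙ v)ᗮ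
  have hball : ball (0 : K) r ⊆ K.orthogonalProjectionOnto '' sphere (0 : E) r := by
    intro u hu
    rw [mem_ball_zero_iff] at hu
    refine ⟨u + √(r ^ 2 - ‖u‖ ^ 2) • v, ?_, ?_⟩
    · have horth : ⟪(u : E), √(r ^ 2 - ‖u‖ ^ 2) • v⟫ = 0 := by
        rw [inner_smul_right, Submodule.mem_orthogonal_singleton_iff_inner_left.mp u.2, mul_zero]
      have hsq := norm_add_sq_eq_norm_sq_add_norm_sq_real horth
      rw [norm_smul, hv, mul_one, Real.norm_of_nonneg (Real.sqrt_nonneg _),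
        Real.mul_self_sqrt (by nlinarith [norm_nonneg u])] at hsq
      rw [mem_sphere_zero_iff_norm]
      have : ‖(u : E) + √(r ^ 2 - ‖u‖ ^ 2) • v‖ ^ 2 = r ^ 2 := by
        simp only [Submodule.coe_norm] at hsq ⊢; nlinarith
      exact (pow_left_inj₀ (norm_nonneg _) hr.le two_ne_zero).mp this
    · rw [map_add, map_smul, K.orthogonalProjectionOnto_mem_subspace_eq_self,
        Submodule.orthogonalProjectionOnto_orthogonalComplement_singleton_eq_zero, smul_zero,
        add_zero]
  calc (0 : ENNReal) < μH[(m : ℝ)] (ball (0 : K) r) :=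
        isOpen_ball.measure_pos _ (nonempty_ball.mpr hr)
    _ ≤ μH[(m : ℝ)] (K.orthogonalProjectionOnto '' sphere (0 : E) r) := measure_mono hball
    _ ≤ μH[(m : ℝ)] (sphere (0 : E) r) :=
      hausdorffMeasure_orthogonalProjectionOnto_le K _ _ (Nat.cast_nonneg m)

theorem hausdorffMeasure_sphere_inter_halfspace_lt_top {m : ℕ} (hm : finrank ℝ E = m + 1)
    {v : E} (hv : ‖v‖ = 1) {r : ℝ} (hr : 0 < r) :
    μH[(m : ℝ)] (sphere (0 : E) r ∩ {x | ⟪v, x⟫ ≤ 0}) < ⊤ := by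
  have hv0 : v ≠ 0 := norm_ne_zero_iff.mp (by rw [hv]; exact one_ne_zero)
  have := isAddHaarMeasure_hausdorffMeasure_orthogonal_span_singleton hm hv0
  set C := sphere (0 : E) r ∩ {x | ⟪v, x⟫ ≤ 0}
  have hC : IsCompact C :=
    (isCompact_sphere 0 r).inter_right (isClosed_le (by fun_prop) continuous_const)
  have hinner : ∀ x ∈ C, ⟪v, r⁻¹ • x⟫ ≤ 0 := fun x hx => by
    rw [inner_smul_right]; exact mul_nonpos_of_nonneg_of_nonpos (inv_nonneg.2 hr.le) hx.2
  -- `C` is the image of a compact set under the (rescaled) inverse stereographic chart from `v`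
  set A := (fun x => stereoToFun v (r⁻¹ • x)) '' C
  have hA : IsCompact A := hC.image_of_continuousOn <|
    continuousOn_stereoToFun.comp (continuous_const_smul _).continuousOn fun x hx => by
      simp only [Set.mem_ofPred_eq, innerSL_apply_apply]; linarith [hinner x hx]
  set g : (ℝ ∙ v)ᗮ → E := fun w => r • stereoInvFunAux v w
  have hCA : C ⊆ g '' A := by
    intro x hx
    refine ⟨_, ⟨x, hx, rfl⟩, ?_⟩
    have hx1 : r⁻¹ • x ∈ sphere (0 : E) 1 := by
      rw [mem_sphere_zero_iff_norm, norm_smul, mem_sphere_zero_iff_norm.mp hx.1, Real.norm_eq_abs,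
        abs_of_pos (inv_pos.2 hr), inv_mul_cancel₀ hr.ne']
    have hne : r⁻¹ • x ≠ v := by
      rintro h
      have := hinner x hx
      rw [h, real_inner_self_eq_norm_sq, hv] at this
      norm_num at this
    have := congrArg Subtype.val (stereo_left_inv hv (x := ⟨r⁻¹ • x, hx1⟩) hne)
    simp only [stereoInvFun] at this
    simp only [g, this, smul_smul, mul_inv_cancel₀ hr.ne', one_smul]
  obtain ⟨L, hL⟩ := ((contDiff_const_smul r).comp
    ((contDiff_stereoInvFunAux (v := v)).comp (ℝ ∙ v)ᗮ.subtypeL.contDiff)).locallyLipschitz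
    |>.locallyLipschitzOn.exists_lipschitzOnWith_of_compact hA
  calc μH[(m : ℝ)] C ≤ μH[(m : ℝ)] (g '' A) := measure_mono hCA
    _ ≤ (L : ENNReal) ^ (m : ℝ) * μH[(m : ℝ)] A := hL.hausdorffMeasure_image_le (Nat.cast_nonneg m)
    _ < ⊤ := ENNReal.mul_lt_top (ENNReal.rpow_lt_top_of_nonneg (Nat.cast_nonneg m)
        ENNReal.coe_ne_top) hA.measure_lt_top

theorem hausdorffMeasure_sphere_lt_top {m : ℕ} (hm : finrank ℝ E = m + 1) {r : ℝ} (hr : 0 < r) :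
    μH[(m : ℝ)] (sphere (0 : E) r) < ⊤ := by
  have := nontrivial_of_finrank_eq_succ hm
  obtain ⟨v, hv⟩ := exists_norm_eq E zero_le_one
  have hcover : sphere (0 : E) r ⊆
      (sphere (0 : E) r ∩ {x | ⟪v, x⟫ ≤ 0}) ∪ (sphere (0 : E) r ∩ {x | ⟪-v, x⟫ ≤ 0}) := by
    intro x hx
    by_cases h : ⟪v, x⟫ ≤ 0
    · exact Or.inl ⟨hx, h⟩
    · exact Or.inr ⟨hx, by rw [Set.mem_ofPred_eq, inner_neg_left]; linarith⟩
  refine (measure_mono hcover).trans_lt ((measure_union_le _ _).trans_lt ?_)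
  exact ENNReal.add_lt_top.2 ⟨hausdorffMeasure_sphere_inter_halfspace_lt_top hm hv hr,
    hausdorffMeasure_sphere_inter_halfspace_lt_top hm (by rwa [norm_neg]) hr⟩

/-- Reflections act transitively on a sphere and preserve `μH[d]`; by compactness finitely many
reflected copies of `V` cover the sphere. -/
theorem hausdorffMeasure_inter_sphere_pos {d r : ℝ} (hS : 0 < μH[d] (sphere (0 : E) r))
    {V : Set E} (hV : IsOpen V) (hVS : (V ∩ sphere (0 : E) r).Nonempty) :
    0 < μH[d] (V ∩ sphere (0 : E) r) := by
  obtain ⟨z₀, hz₀V, hz₀S⟩ := hVS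
  let T : E → E ≃ₗᵢ[ℝ] E := fun z => (ℝ ∙ (z₀ - z))ᗮ.reflection
  have hcover : sphere (0 : E) r ⊆ ⋃ z, T z ⁻¹' V := by
    intro z hz
    refine Set.mem_iUnion.2 ⟨z, ?_⟩
    have hT : T z z₀ = z := Submodule.reflection_sub <| by
      rw [mem_sphere_zero_iff_norm.1 hz₀S, mem_sphere_zero_iff_norm.1 hz]
    have hTz : T z z = z₀ := calc
      T z z = T z (T z z₀) := by rw [hT]
      _ = z₀ := Submodule.reflection_reflection _ z₀
    rw [Set.mem_preimage, hTz]
    exact hz₀V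
  obtain ⟨t, ht⟩ := (isCompact_sphere 0 r).elim_finite_subcover _
    (fun z => hV.preimage (T z).continuous) hcover
  have hpiece (z : E) :
      μH[d] (T z ⁻¹' V ∩ sphere (0 : E) r) = μH[d] (V ∩ sphere (0 : E) r) := by
    have hST : T z ⁻¹' sphere (0 : E) r = sphere 0 r := by
      rw [LinearIsometryEquiv.preimage_sphere, map_zero]
    rw [← (T z).toIsometryEquiv.hausdorffMeasure_preimage d (V ∩ sphere 0 r),
      LinearIsometryEquiv.coe_toIsometryEquiv,
      Set.preimage_inter, hST]
  have hsub : sphere (0 : E) r ⊆ ⋃ z ∈ t, T z ⁻¹' V ∩ sphere (0 : E) r := fun x hx => by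
    obtain ⟨z, hz, hxz⟩ := Set.mem_iUnion₂.1 (ht hx)
    exact Set.mem_iUnion₂.2 ⟨z, hz, hxz, hx⟩
  by_contra! h0
  refine hS.ne' (le_antisymm ?_ zero_le)
  calc μH[d] (sphere (0 : E) r) ≤ μH[d] (⋃ z ∈ t, T z ⁻¹' V ∩ sphere (0 : E) r) := measure_mono hsub
    _ ≤ ∑ z ∈ t, μH[d] (T z ⁻¹' V ∩ sphere (0 : E) r) := measure_biUnion_finset_le t _
    _ = 0 := by simp only [hpiece, nonpos_iff_eq_zero.1 h0, Finset.sum_const_zero]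

end SphereMeasure

theorem eqOn_zero_of_setAverage_eq_zero {X : Type*} [TopologicalSpace X] [T2Space X]
    [MeasurableSpace X] [OpensMeasurableSpace X] {μ : Measure X} {S : Set X} {f : X → ℝ}
    (hS : IsCompact S) (hμS : μ S ≠ ⊤)
    (hpos : ∀ V, IsOpen V → (V ∩ S).Nonempty → 0 < μ (V ∩ S))
    (hf : Continuous f) (hf0 : ∀ x ∈ S, 0 ≤ f x) (havg : ⨍ x in S, f x ∂μ = 0) :
    Set.EqOn f 0 S := by
  intro z hz
  by_contra hfz
  have hSm : MeasurableSet S := hS.isClosed.measurableSet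
  have hμS0 : μ.real S ≠ 0 := by
    refine (ENNReal.toReal_pos (ne_of_gt ?_) hμS).ne'
    simpa using hpos Set.univ isOpen_univ ⟨z, trivial, hz⟩
  have hint : IntegrableOn f S μ := by
    obtain ⟨C, hC⟩ := hS.exists_bound_of_continuousOn hf.continuousOn
    exact Measure.integrableOn_of_bounded hμS hf.aestronglyMeasurable
      ((ae_restrict_mem hSm).mono hC)
  rw [setAverage_eq, smul_eq_zero, or_iff_right (inv_ne_zero hμS0)] at havg
  have hae := (setIntegral_eq_zero_iff_of_nonneg_ae ((ae_restrict_mem hSm).mono hf0) hint).1 havg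
  rw [Filter.EventuallyEq, ae_restrict_iff' hSm, ae_iff] at hae
  refine (hpos {x | f x ≠ 0} (isOpen_ne_fun hf continuous_const) ⟨z, hfz, hz⟩).ne' ?_
  exact measure_mono_null (fun x ⟨hx, hxS⟩ => fun h => hx (h hxS)) hae

theorem sphAvg_comp_linearIsometryEquiv {n : ℕ} (r : ℝ) (T : Euc n ≃ₗᵢ[ℝ] Euc n) (f : Euc n → ℝ) :
    sphAvg n r (fun x => f (T x)) = sphAvg n r f := by
  unfold sphAvg
  split_ifs
  · exact congrArg f (map_zero T)
  · exact setAverage_sphere_comp_linearIsometryEquiv _ r T f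

theorem sphAvg_nonneg {n : ℕ} {r : ℝ} {f : Euc n → ℝ} (hf : ∀ x, 0 ≤ f x) : 0 ≤ sphAvg n r f := by
  unfold sphAvg
  split_ifs
  · exact hf 0
  · rw [setAverage_eq]
    exact smul_nonneg (inv_nonneg.2 measureReal_nonneg) (integral_nonneg hf)

theorem eqOn_zero_of_sphAvg_eq_zero {n : ℕ} {r : ℝ} {f : Euc n → ℝ} (hf : Continuous f)
    (hf0 : ∀ x ∈ sphere (0 : Euc n) r, 0 ≤ f x) (havg : sphAvg n r f = 0) :
    Set.EqOn f 0 (sphere (0 : Euc n) r) := by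
  intro z hz
  rcases eq_or_ne r 0 with rfl | hr
  · rw [sphere_zero, Set.mem_singleton_iff] at hz
    subst hz
    simpa [sphAvg] using havg
  have hzr : ‖z‖ = r := mem_sphere_zero_iff_norm.1 hz
  have hz0 : z ≠ 0 := by rintro rfl; exact hr (by simpa using hzr.symm)
  have hr' : 0 < r := hzr ▸ norm_pos_iff.2 hz0
  obtain ⟨m, rfl⟩ : ∃ m, n = m + 1 := Nat.exists_eq_add_one.2 <| Nat.pos_of_ne_zero <| by
    rintro rfl; exact hz0 (Subsingleton.elim _ _)
  have hm : finrank ℝ (Euc (m + 1)) = m + 1 := finrank_euclideanSpace_fin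
  rw [sphAvg, if_neg hr, show ((m + 1 : ℕ) : ℝ) - 1 = m by push_cast; ring] at havg
  exact eqOn_zero_of_setAverage_eq_zero (isCompact_sphere 0 r)
    (hausdorffMeasure_sphere_lt_top hm hr').ne
    (fun V hV hVS => hausdorffMeasure_inter_sphere_pos (hausdorffMeasure_sphere_pos hm hr') hV hVS)
    hf hf0 havg hz

theorem evalPt_mul {n : ℕ} (x : Euc n) (p q : MvPolynomial (Fin n) ℝ) :
    evalPt x (p * q) = evalPt x p * evalPt x q :=
  map_mul _ p q

theorem continuous_evalPt {n : ℕ} (p : MvPolynomial (Fin n) ℝ) :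
    Continuous fun x : Euc n => evalPt x p :=
  (MvPolynomial.continuous_eval p).comp (PiLp.continuous_ofLp 2 _)

theorem MvPolynomial.totalDegree_bind₁_le {σ τ R : Type*} [CommSemiring R]
    (f : σ → MvPolynomial τ R) (hf : ∀ i, (f i).totalDegree ≤ 1) (p : MvPolynomial σ R) :
    (bind₁ f p).totalDegree ≤ p.totalDegree := by
  conv_lhs => rw [p.as_sum]
  rw [map_sum]
  refine (totalDegree_finsetSum _ _).trans (Finset.sup_le fun d hd => ?_)
  rw [bind₁_monomial]
  refine (totalDegree_mul _ _).trans ?_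
  rw [totalDegree_C, zero_add]
  refine (totalDegree_finsetProd _ _).trans
    ((Finset.sum_le_sum fun i _ => ?_).trans (le_totalDegree hd))
  exact (totalDegree_pow _ _).trans (by simpa using Nat.mul_le_mul_left (d i) (hf i))

theorem exists_evalPt_eq_evalPt_comp {n : ℕ} (A : Euc n →ₗ[ℝ] Euc n) (p : MvPolynomial (Fin n) ℝ) :
    ∃ q : MvPolynomial (Fin n) ℝ, q.totalDegree ≤ p.totalDegree ∧
      ∀ x, evalPt x q = evalPt (A x) p := by
  set lin : Fin n → MvPolynomial (Fin n) ℝ := fun i =>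
    ∑ j, MvPolynomial.C (A (EuclideanSpace.single j 1) i) * MvPolynomial.X j
  have hlin : ∀ i, (lin i).totalDegree ≤ 1 := fun i =>
    (MvPolynomial.totalDegree_finsetSum _ _).trans <| Finset.sup_le fun j _ =>
      (MvPolynomial.totalDegree_mul _ _).trans (by simp)
  refine ⟨MvPolynomial.bind₁ lin p, MvPolynomial.totalDegree_bind₁_le lin hlin p, fun x => ?_⟩
  have hcoord : ∀ i, MvPolynomial.eval (fun j => x j) (lin i) = A x i := fun i => by
    conv_rhs => rw [← (EuclideanSpace.basisFun (Fin n) ℝ).sum_repr x]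
    simp [lin, mul_comm]
  rw [evalPt, evalPt, ← funext hcoord]
  exact MvPolynomial.eval₂Hom_bind₁ (RingHom.id ℝ) _ lin p

theorem mem_suppSpheres_of_mem {n : ℕ} {X : Finset (Euc n)} {x : Euc n} (hx : x ∈ X) :
    x ∈ suppSpheres n X :=
  Set.mem_iUnion₂.2 ⟨‖x‖, Finset.mem_image_of_mem _ hx, mem_sphere_zero_iff_norm.2 rfl⟩

namespace IsEuclideanDesign

variable {n e : ℕ} {X : Finset (Euc n)} {w : Euc n → ℝ}

theorem sum_mul_sphAvg_sq (h : IsEuclideanDesign n (2 * e) X w) {p : MvPolynomial (Fin n) ℝ}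
    (hp : p.totalDegree ≤ e) :
    ∑ r ∈ X.image (fun x => ‖x‖),
        (∑ x ∈ X.filter (fun x => ‖x‖ = r), w x) * sphAvg n r (fun y => evalPt y p ^ 2)
      = ∑ x ∈ X, w x * evalPt x p ^ 2 := by
  simpa only [evalPt_mul, sq] using h (p * p) ((MvPolynomial.totalDegree_mul p p).trans (by omega))

theorem evalPt_eq_zero_of_forall_mem (h : IsEuclideanDesign n (2 * e) X w)
    (hw : ∀ x ∈ X, 0 < w x) {p : MvPolynomial (Fin n) ℝ} (hp : p.totalDegree ≤ e)
    (hX : ∀ x ∈ X, evalPt x p = 0) {z : Euc n} (hz : z ∈ suppSpheres n X) : evalPt z p = 0 := by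
  have hmass : ∀ r ∈ X.image (fun x => ‖x‖), 0 < ∑ x ∈ X.filter (fun x => ‖x‖ = r), w x := by
    intro r hr
    obtain ⟨x, hx, rfl⟩ := Finset.mem_image.1 hr
    exact Finset.sum_pos (fun y hy => hw y (Finset.mem_filter.1 hy).1)
      ⟨x, Finset.mem_filter.2 ⟨hx, rfl⟩⟩
  have hsum := h.sum_mul_sphAvg_sq hp
  rw [Finset.sum_eq_zero (s := X) fun x hx => by rw [hX x hx]; ring,
    Finset.sum_eq_zero_iff_of_nonneg
      fun r hr => mul_nonneg (hmass r hr).le (sphAvg_nonneg fun _ => sq_nonneg _)] at hsum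
  obtain ⟨r, hr, hzr⟩ := Set.mem_iUnion₂.1 hz
  have havg := (mul_eq_zero.1 (hsum r hr)).resolve_left (hmass r hr).ne'
  exact pow_eq_zero_iff two_ne_zero |>.1 <|
    eqOn_zero_of_sphAvg_eq_zero ((continuous_evalPt p).pow 2) (fun _ _ => sq_nonneg _) havg hzr

end IsEuclideanDesign

namespace IsTightOnS

variable {n e : ℕ} {X : Finset (Euc n)} {w : Euc n → ℝ}

theorem exists_interpolating_poly (ht : IsTightOnS n e X w) (hw : ∀ x ∈ X, 0 < w x)
    (f : Euc n → ℝ) :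
    ∃ p : MvPolynomial (Fin n) ℝ, p.totalDegree ≤ e ∧ ∀ z ∈ X, evalPt z p = f z := by
  set S := suppSpheres n X
  let L : PolOn n e S →ₗ[ℝ] (X → ℝ) :=
    (LinearMap.funLeft ℝ ℝ fun x : X => (⟨x, mem_suppSpheres_of_mem x.2⟩ : S)).comp
      (PolOn n e S).subtype
  have hL : Function.Injective L := by
    rw [← LinearMap.ker_eq_bot, Submodule.eq_bot_iff]
    rintro ⟨_, p, hp, rfl⟩ hker
    ext ⟨z, hz⟩
    exact ht.1.evalPt_eq_zero_of_forall_mem hw ((MvPolynomial.mem_restrictTotalDegree _ _ _).1 hp)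
      (fun x hx => congrFun hker ⟨x, hx⟩) hz
  have : FiniteDimensional ℝ (PolOn n e S) := .of_injective L hL
  have hdim : finrank ℝ (PolOn n e S) = finrank ℝ (X → ℝ) := by
    rw [finrank_fintype_fun_eq_card, Fintype.card_coe, ht.2]; rfl
  obtain ⟨⟨_, p, hp, rfl⟩, hf⟩ :=
    (LinearMap.injective_iff_surjective_of_finrank_eq_finrank hdim).1 hL fun z => f z
  exact ⟨p, (MvPolynomial.mem_restrictTotalDegree _ _ _).1 hp, fun z hz => congrFun hf ⟨z, hz⟩⟩

theorem weight_le_of_norm_eq (ht : IsTightOnS n e X w) (hw : ∀ x ∈ X, 0 < w x) {x y : Euc n}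
    (hx : x ∈ X) (hy : y ∈ X) (hxy : ‖x‖ = ‖y‖) : w x ≤ w y := by
  obtain ⟨p, hpe, hp⟩ := ht.exists_interpolating_poly hw fun z => if z = y then 1 else 0
  set T : Euc n ≃ₗᵢ[ℝ] Euc n := (ℝ ∙ (x - y))ᗮ.reflection
  obtain ⟨q, hqp, hq⟩ := exists_evalPt_eq_evalPt_comp T.toLinearEquiv.toLinearMap p
  have hqx : evalPt x q = 1 := by
    rw [hq]
    simp [T, Submodule.reflection_sub hxy, hp y hy]
  have hsphAvg (r : ℝ) :
      sphAvg n r (fun z => evalPt z q ^ 2) = sphAvg n r (fun z => evalPt z p ^ 2) := by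
    simp only [hq]
    exact sphAvg_comp_linearIsometryEquiv r T (fun z => evalPt z p ^ 2)
  calc w x = w x * evalPt x q ^ 2 := by rw [hqx]; ring
    _ ≤ ∑ z ∈ X, w z * evalPt z q ^ 2 :=
      Finset.single_le_sum (f := fun z => w z * evalPt z q ^ 2)
        (fun z hz => mul_nonneg (hw z hz).le (sq_nonneg _)) hx
    _ = ∑ z ∈ X, w z * evalPt z p ^ 2 := by
      rw [← ht.1.sum_mul_sphAvg_sq (hqp.trans hpe), ← ht.1.sum_mul_sphAvg_sq hpe]
      simp only [hsphAvg]
    _ = w y := by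
      rw [Finset.sum_congr rfl fun z hz => by rw [hp z hz]]
      simp [hy]

end IsTightOnS

theorem weight_constant_on_layers_of_tight_general (n e : ℕ)
    (X : Finset (Euc n)) (w : Euc n → ℝ)
    (hw : ∀ x ∈ X, 0 < w x)
    (ht : IsTightOnS n e X w) :
    ∀ x ∈ X, ∀ y ∈ X, ‖x‖ = ‖y‖ → w x = w y :=
  fun _ hx _ hy hxy =>
    (ht.weight_le_of_norm_eq hw hx hy hxy).antisymm (ht.weight_le_of_norm_eq hw hy hx hxy.symm)

/-- If `(X, w)` is a tight Euclidean `2e`-design on its concentric spheres,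
then the weight `w` is constant on each layer `Xᵢ = X ∩ Sᵢ`. -/
theorem weight_constant_on_layers_of_tight (n e : ℕ)
    (X : Finset (Euc n)) (w : Euc n → ℝ)
    (hne : X.Nonempty) (hw : ∀ x ∈ X, 0 < w x)
    (ht : IsTightOnS n e X w) :
    ∀ x ∈ X, ∀ y ∈ X, ‖x‖ = ‖y‖ → w x = w y :=
  weight_constant_on_layers_of_tight_general n e X w hw ht

end
end

section
/- If X ⊆ S^{n−1} is an s-distance set (n ≥ 2), then |X| ≤ C(n−1+s, n−1) + C(n−2+s, n−1). -/
/-!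
Annihilator polynomials (Delsarte–Goethals–Seidel). Let `A` be the set of the `s` distances of
`Y ⊆ S^{n-1}`. Since `‖x - y‖² = 2 - 2⟪x, y⟫` on the sphere, for `y ∈ Y` the degree-`s` polynomial
`∏_{d ∈ A} (⟪x, y⟫ - 1 + d² / 2)` vanishes on `Y` except at `y`, so polynomials of degree `≤ s`
restrict to all functions on `Y` and `|Y|` is at most the dimension of the polynomial functions of
degree `≤ s` on the sphere. There `x₀² = 1 - (x₁² + ⋯ + x_{n-1}²)`, so every such function is
`g(x₁, …, x_{n-1}) + x₀ h(x₁, …, x_{n-1})` with `deg g ≤ s` and `deg h ≤ s - 1`, and counting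
monomials in `n - 1` variables gives `C(n-1+s, n-1) + C(n-2+s, n-1)`.
-/

open MeasureTheory Metric Finset
open scoped Classical RealInnerProductSpace

noncomputable section

namespace MvPolynomial

theorem finrank_restrictTotalDegree (σ K : Type*) [Fintype σ] [Field K] (k : ℕ) :
    Module.finrank K (restrictTotalDegree σ K k) =
      (k + Fintype.card σ).choose (Fintype.card σ) := by
  have hset : {d : σ →₀ ℕ | (d.sum fun _ e => e) ≤ k}
      = ↑((range (k + 1)).biUnion fun i => (univ : Finset σ).finsuppAntidiag i) := by
    ext d
    simp [Finsupp.sum_fintype]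
  rw [restrictTotalDegree, Module.finrank_eq_nat_card_basis (basisRestrictSupport K _),
    Nat.card_coe_set_eq, hset, Set.ncard_coe_finset, card_biUnion, ← Nat.sum_range_multichoose]
  · simp [card_finsuppAntidiag_nat_eq_multichoose]
  · intro i _ j _ hij
    exact disjoint_left.2 fun d hi hj =>
      hij ((mem_finsuppAntidiag.1 hi).1.symm.trans (mem_finsuppAntidiag.1 hj).1)

theorem exists_eval_eq_add_mul_of_sum_sq_eq_one {R : Type*} [CommRing R] {m s : ℕ}
    (p : MvPolynomial (Fin (m + 1)) R) (hp : p.totalDegree ≤ s + 1) :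
    ∃ g h : MvPolynomial (Fin m) R, g.totalDegree ≤ s + 1 ∧ h.totalDegree ≤ s ∧
      ∀ x : Fin (m + 1) → R, ∑ i, x i ^ 2 = 1 →
        eval x p = eval (Fin.tail x) g + x 0 * eval (Fin.tail x) h := by
  set P := finSuccEquiv R m p
  set Q : MvPolynomial (Fin m) R := 1 - ∑ i, X i ^ 2
  have hQ : Q.totalDegree ≤ 2 := by
    refine (totalDegree_sub _ _).trans (max_le (by simp) ?_)
    refine (totalDegree_finsetSum _ _).trans (Finset.sup_le fun i _ => ?_)
    rw [X_pow_eq_monomial]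
    exact (totalDegree_monomial_le _ _).trans (by simp)
  have hterm : ∀ i ∈ P.support, (P.coeff i * Q ^ (i / 2)).totalDegree + i % 2 ≤ s + 1 := by
    intro i hi
    have hcoeff : (P.coeff i).totalDegree + i ≤ p.totalDegree :=
      totalDegree_coeff_finSuccEquiv_add_le p i (Polynomial.mem_support_iff.1 hi)
    have hpow : (Q ^ (i / 2)).totalDegree ≤ 2 * (i / 2) :=
      (totalDegree_pow _ _).trans (by rw [mul_comm]; exact Nat.mul_le_mul_right _ hQ)
    have := totalDegree_mul (P.coeff i) (Q ^ (i / 2))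
    omega
  -- `x₀ⁱ = (x₀²)^(i / 2) * x₀^(i % 2)` and `x₀² = Q(x₁, …, xₘ)` on the sphere
  refine ⟨∑ i ∈ P.support with Even i, P.coeff i * Q ^ (i / 2),
    ∑ i ∈ P.support with ¬Even i, P.coeff i * Q ^ (i / 2), ?_, ?_, ?_⟩
  · refine (totalDegree_finsetSum _ _).trans (Finset.sup_le fun i hi => ?_)
    have := hterm i (mem_filter.1 hi).1
    omega
  · refine (totalDegree_finsetSum _ _).trans (Finset.sup_le fun i hi => ?_)
    have := hterm i (mem_filter.1 hi).1
    have := Nat.odd_iff.1 (Nat.not_even_iff_odd.1 (mem_filter.1 hi).2)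
    omega
  · intro x hx
    have hx0 : x 0 ^ 2 = eval (Fin.tail x) Q := by
      rw [Fin.sum_univ_succ] at hx
      simp only [Q, map_sub, map_one, map_sum, map_pow, eval_X, Fin.tail]
      linear_combination hx
    conv_lhs => rw [← Fin.cons_self_tail x, eval_eq_eval_mv_eval', Polynomial.eval_map,
      Polynomial.eval₂_eq_sum, Polynomial.sum_def, ← sum_filter_add_sum_filter_not _ Even]
    simp only [map_sum, map_mul, map_pow, mul_sum, ← hx0, ← pow_mul]
    congr 1 <;> refine sum_congr rfl fun i hi => ?_
    · rw [Nat.mul_div_cancel' (even_iff_two_dvd.1 (mem_filter.1 hi).2)]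
    · rw [mul_left_comm, ← pow_succ',
        Nat.two_mul_div_two_add_one_of_odd (Nat.not_even_iff_odd.1 (mem_filter.1 hi).2)]

end MvPolynomial

theorem Submodule.eq_top_of_forall_exists_apply_ne_zero {K ι : Type*} [Field K] [Fintype ι]
    (V : Submodule K (ι → K)) (hV : ∀ i, ∃ f ∈ V, f i ≠ 0 ∧ ∀ j ≠ i, f j = 0) : V = ⊤ := by
  refine Submodule.eq_top_iff'.2 fun v => ?_
  rw [pi_eq_sum_univ v]
  refine sum_mem fun i _ => smul_mem _ _ ?_
  obtain ⟨f, hfV, hfi, hf⟩ := hV i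
  convert smul_mem V (f i)⁻¹ hfV using 1
  funext j
  by_cases hij : i = j
  · subst hij; simp [hfi]
  · simp [hij, hf j (Ne.symm hij)]

theorem dimPolOn_le (n e : ℕ) (S : Set (Euc n)) : dimPolOn n e S ≤ (e + n).choose n :=
  calc dimPolOn n e S ≤ Module.finrank ℝ (MvPolynomial.restrictTotalDegree (Fin n) ℝ e) :=
        Submodule.finrank_map_le _ _
    _ = (e + n).choose n := by
        rw [MvPolynomial.finrank_restrictTotalDegree, Fintype.card_fin]

theorem dimPolOn_succ_le_of_subset_sphere {m s : ℕ} {S : Set (Euc (m + 1))}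
    (hS : S ⊆ sphere 0 1) :
    dimPolOn (m + 1) (s + 1) S ≤ (s + 1 + m).choose m + (s + m).choose m := by
  set L₀ := polyRestrict (m + 1) S ∘ₗ (MvPolynomial.rename Fin.succ).toLinearMap
  set L₁ := polyRestrict (m + 1) S ∘ₗ LinearMap.mulLeft ℝ (MvPolynomial.X 0) ∘ₗ
    (MvPolynomial.rename Fin.succ).toLinearMap
  set U := (MvPolynomial.restrictTotalDegree (Fin m) ℝ (s + 1)).map L₀
  set W := (MvPolynomial.restrictTotalDegree (Fin m) ℝ s).map L₁
  have hle : PolOn (m + 1) (s + 1) S ≤ U ⊔ W := by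
    rintro _ ⟨p, hp, rfl⟩
    obtain ⟨g, h, hg, hh, hgh⟩ := MvPolynomial.exists_eval_eq_add_mul_of_sum_sq_eq_one p
      ((MvPolynomial.mem_restrictTotalDegree _ _ _).1 hp)
    have hsplit : polyRestrict (m + 1) S p = L₀ g + L₁ h := by
      funext x
      have hx : ∑ i, (x : Euc (m + 1)) i ^ 2 = 1 := by
        rw [← EuclideanSpace.real_norm_sq_eq, mem_sphere_zero_iff_norm.1 (hS x.2), one_pow]
      simp [L₀, L₁, polyRestrict, evalPt, hgh _ hx, MvPolynomial.eval_rename]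
      rfl
    rw [hsplit]
    exact Submodule.add_mem_sup ⟨g, (MvPolynomial.mem_restrictTotalDegree _ _ _).2 hg, rfl⟩
      ⟨h, (MvPolynomial.mem_restrictTotalDegree _ _ _).2 hh, rfl⟩
  calc dimPolOn (m + 1) (s + 1) S ≤ Module.finrank ℝ ↥(U ⊔ W) := Submodule.finrank_mono hle
    _ ≤ Module.finrank ℝ U + Module.finrank ℝ W := Submodule.finrank_add_le_finrank_add_finrank _ _
    _ ≤ (s + 1 + m).choose m + (s + m).choose m := by
        gcongr <;> refine (Submodule.finrank_map_le _ _).trans_eq ?_ <;>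
          rw [MvPolynomial.finrank_restrictTotalDegree, Fintype.card_fin]

def distances {E : Type*} [SeminormedAddCommGroup E] (Y : Finset E) : Finset ℝ :=
  Y.offDiag.image fun p => ‖p.1 - p.2‖

theorem mem_distances {E : Type*} [SeminormedAddCommGroup E] {Y : Finset E} {d : ℝ} :
    d ∈ distances Y ↔ ∃ x ∈ Y, ∃ y ∈ Y, x ≠ y ∧ d = ‖x - y‖ := by
  simp [distances, eq_comm, and_assoc]

theorem coe_distances {E : Type*} [SeminormedAddCommGroup E] (Y : Finset E) :
    (distances Y : Set ℝ) = {d : ℝ | ∃ x ∈ Y, ∃ y ∈ Y, x ≠ y ∧ d = ‖x - y‖} :=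
  Set.ext fun _ => mem_distances

def innerPoly {n : ℕ} (y : Euc n) : MvPolynomial (Fin n) ℝ :=
  ∑ i, MvPolynomial.C (y i) * MvPolynomial.X i

theorem evalPt_innerPoly {n : ℕ} (x y : Euc n) : evalPt x (innerPoly y) = ⟪x, y⟫ := by
  simp [innerPoly, evalPt, PiLp.inner_apply, mul_comm]

theorem totalDegree_innerPoly_le {n : ℕ} (y : Euc n) : (innerPoly y).totalDegree ≤ 1 := by
  refine (MvPolynomial.totalDegree_finsetSum _ _).trans (Finset.sup_le fun i _ => ?_)
  refine (MvPolynomial.totalDegree_mul _ _).trans ?_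
  rw [MvPolynomial.totalDegree_C, MvPolynomial.totalDegree_X, zero_add]

theorem polOn_distances_eq_top {n : ℕ} {Y : Finset (Euc n)} (hY : ↑Y ⊆ sphere (0 : Euc n) 1) :
    PolOn n #(distances Y) ↑Y = ⊤ := by
  refine Submodule.eq_top_of_forall_exists_apply_ne_zero _ fun ⟨y, hy⟩ => ?_
  set p := ∏ d ∈ distances Y, (innerPoly y - MvPolynomial.C (1 - d ^ 2 / 2))
  have hdeg : p.totalDegree ≤ #(distances Y) := by
    refine (MvPolynomial.totalDegree_finsetProd _ _).trans ?_
    refine (sum_le_sum fun d _ => ?_).trans_eq (card_eq_sum_ones _).symm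
    refine (MvPolynomial.totalDegree_sub_C_le _ _).trans (totalDegree_innerPoly_le y)
  have heval : ∀ x ∈ Y, evalPt x p = ∏ d ∈ distances Y, (d ^ 2 - ‖x - y‖ ^ 2) / 2 := by
    intro x hx
    have hx1 := mem_sphere_zero_iff_norm.1 (hY hx)
    have hy1 := mem_sphere_zero_iff_norm.1 (hY hy)
    simp only [p, evalPt, map_prod, map_sub, MvPolynomial.eval_C]
    refine prod_congr rfl fun d _ => ?_
    rw [← evalPt, evalPt_innerPoly, norm_sub_sq_real, hx1, hy1]
    ring
  refine ⟨polyRestrict n ↑Y p,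
    ⟨p, (MvPolynomial.mem_restrictTotalDegree _ _ _).2 hdeg, rfl⟩, ?_, ?_⟩
  · change evalPt y p ≠ 0
    rw [heval y hy, sub_self, norm_zero]
    refine prod_ne_zero_iff.2 fun d hd => ?_
    obtain ⟨a, -, b, -, hab, rfl⟩ := mem_distances.1 hd
    simpa [sub_eq_zero] using hab
  · rintro ⟨z, hz⟩ hzy
    change evalPt z p = 0
    rw [heval z hz]
    refine prod_eq_zero (i := ‖z - y‖) ?_ (by ring)
    exact mem_distances.2 ⟨z, hz, y, hy, fun h => hzy (Subtype.ext h), rfl⟩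

/-- If `X ⊆ S^{n-1}` is an `s`-distance set (`n ≥ 2`), then
`|X| ≤ C(n-1+s, n-1) + C(n-2+s, n-1)`. -/
theorem distance_set_card_upper_bound (n s : ℕ) (hn : 2 ≤ n)
    (Y : Finset (Euc n))
    (hYs : (↑Y : Set (Euc n)) ⊆ Metric.sphere (0 : Euc n) 1)
    (hs : ({d : ℝ | ∃ x ∈ Y, ∃ y ∈ Y, x ≠ y ∧ d = ‖x - y‖}).ncard = s) :
    Y.card ≤ (n - 1 + s).choose (n - 1) + (n - 2 + s).choose (n - 1) := by
  obtain ⟨m, rfl⟩ : ∃ m, n = m + 2 := ⟨n - 2, by omega⟩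
  rw [← coe_distances, Set.ncard_coe_finset] at hs
  have hcard : Y.card = dimPolOn (m + 2) s ↑Y := by
    rw [dimPolOn, ← hs, polOn_distances_eq_top hYs, finrank_top,
      Module.finrank_fintype_fun_eq_card]
    simp
  rcases s with _ | s
  · calc Y.card = dimPolOn (m + 2) 0 ↑Y := hcard
      _ ≤ (0 + (m + 2)).choose (m + 2) := dimPolOn_le _ _ _
      _ ≤ _ := by simp
  · calc Y.card = dimPolOn (m + 2) (s + 1) ↑Y := hcard
      _ ≤ (s + 1 + (m + 1)).choose (m + 1) + (s + (m + 1)).choose (m + 1) :=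
        dimPolOn_succ_le_of_subset_sphere hYs
      _ = _ := by congr 2 <;> omega
end
end
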